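/- arXiv:2305.19210 — 2 statements merged into one kernel-verified Lean document; each statement's English description precedes it below -/
import Mathlib

section
/- For vectors v₁, v₂ ∈ ℝ^d, the Lie element [v₁,[v₁,v₂]] + [v₂,[v₂,v₁]] in the tensor algebra vanishes if and only if v₁ and v₂ are collinear. Consequently, no piecewise linear path with two non-collinear pieces has vanishing level-three log-signature. -/
/-- For `v₁, v₂ ∈ ℝ^d`, the level-three Lie element
`[v₁,[v₁,v₂]] + [v₂,[v₂,v₁]]` in the tensor algebra (with coordinates computed from
`[x,y] = x⊗y − y⊗x`) vanishes if and only if `v₁` and `v₂` are collinear. Consequently,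
no piecewise linear path with two non-collinear pieces has vanishing level-three
log-signature. -/
theorem level_three_bracket_eq_zero_iff_collinear (d : ℕ) (v₁ v₂ : Fin d → ℝ) :
    (∀ i j k : Fin d,
        (v₁ i * (v₁ j * v₂ k - v₂ j * v₁ k) - (v₁ i * v₂ j - v₂ i * v₁ j) * v₁ k)
          + (v₂ i * (v₂ j * v₁ k - v₁ j * v₂ k) - (v₂ i * v₁ j - v₁ i * v₂ j) * v₂ k) = 0)
      ↔ ((∃ lam : ℝ, v₂ = lam • v₁) ∨ (∃ lam : ℝ, v₁ = lam • v₂)) := by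
  constructor
  · intro h
    have hE : ∀ i j k, (v₁ i - v₂ i) * (v₁ j * v₂ k - v₂ j * v₁ k)
        - (v₁ i * v₂ j - v₂ i * v₁ j) * (v₁ k - v₂ k) = 0 := by
      intro i j k
      linear_combination h i j k
    have hw : ∀ i j, v₁ i * v₂ j - v₂ i * v₁ j = 0 := by
      intro a b
      by_contra hab
      have hua : (v₁ a - v₂ a) * (v₁ a * v₂ b - v₂ a * v₁ b) = 0 := by
        linear_combination hE a a b
      have hua' : v₁ a - v₂ a = 0 := by
        rcases mul_eq_zero.mp hua with h' | h'
        · exact h'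
        · exact absurd h' hab
      have heq : v₁ = v₂ := by
        funext k
        have hk := hE a b k
        have : (v₁ a * v₂ b - v₂ a * v₁ b) * (v₁ k - v₂ k) = 0 := by
          linear_combination -hk + (v₁ b * v₂ k - v₂ b * v₁ k) * hua'
        rcases mul_eq_zero.mp this with h' | h'
        · exact absurd h' hab
        · linarith
      apply hab
      rw [heq]; ring
    by_cases h0 : v₁ = 0
    · exact Or.inr ⟨0, by simp [h0]⟩
    · obtain ⟨a, ha⟩ : ∃ a, v₁ a ≠ 0 := by
        by_contra hc
        push_neg at hc
        exact h0 (funext hc)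
      refine Or.inl ⟨v₂ a / v₁ a, funext fun j => ?_⟩
      have := hw a j
      simp only [Pi.smul_apply, smul_eq_mul]
      field_simp
      linarith [hw a j]
  · rintro (⟨l, rfl⟩ | ⟨l, rfl⟩) <;> intro i j k <;>
      simp only [Pi.smul_apply, smul_eq_mul] <;> ring
end

section
/- For a piecewise linear path with three pieces v₁, v₂, v₃ ∈ ℝ^d satisfying v₁ + 3v₂ + v₃ = 0, the level-three log-signature expression (1/12)∑_{i ≠ j}(v_i⊗v_i⊗v_j + v_i⊗v_j⊗v_j) + (1/3)∑_{(i,j,k): i<j<k or i>j>k} v_i⊗v_j⊗v_k − (1/6)∑_{(i,j,k): i<j>k or i>j<k} v_i⊗v_j⊗v_k vanishes in (ℝ^d)^{⊗3}. -/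
theorem eq_neg_third_smul_of_add_three_smul_add_eq_zero {E : Type*} [AddCommGroup E]
    [Module ℝ E] {x y z : E} (h : x + (3 : ℝ) • y + z = 0) :
    y = -(1/3 : ℝ) • (x + z) := by
  have h3y : (3 : ℝ) • y = -(x + z) := by
    rw [eq_neg_iff_add_eq_zero, ← h]
    abel
  calc y = (1/3 : ℝ) • (3 : ℝ) • y := by rw [smul_smul]; norm_num
    _ = -(1/3 : ℝ) • (x + z) := by rw [h3y, smul_neg, neg_smul]

/-- The `(p, q, r)` coordinate of the level-three log-signature of the piecewise linear path
with pieces `v 0, …, v (m - 1)` in `ℝ^d`. -/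
noncomputable def logSigLevelThree {m d : ℕ} (v : Fin m → Fin d → ℝ) (p q r : Fin d) : ℝ :=
  (1/12 : ℝ) * (∑ i : Fin m, ∑ j : Fin m,
      if i ≠ j then v i p * v i q * v j r + v i p * v j q * v j r else 0)
    + (1/3 : ℝ) * (∑ i : Fin m, ∑ j : Fin m, ∑ k : Fin m,
      if (i < j ∧ j < k) ∨ (k < j ∧ j < i) then v i p * v j q * v k r else 0)
    - (1/6 : ℝ) * (∑ i : Fin m, ∑ j : Fin m, ∑ k : Fin m,
      if (i < j ∧ k < j) ∨ (j < i ∧ j < k) then v i p * v j q * v k r else 0)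

theorem logSigLevelThree_eq_zero_of_middle_eq {d : ℕ} (v : Fin 3 → Fin d → ℝ)
    (hmid : v 1 = -(1/3 : ℝ) • (v 0 + v 2)) (p q r : Fin d) :
    logSigLevelThree v p q r = 0 := by
  simp only [logSigLevelThree, Fin.sum_univ_three, hmid]
  norm_num [Fin.lt_def, Fin.ext_iff]
  ring

/-- If the three pieces `v₁, v₂, v₃ ∈ ℝ^d` of a piecewise linear path
satisfy `v₁ + 3v₂ + v₃ = 0`, then the level-three log-signature
`(1/12)∑_{i≠j}(v_i⊗v_i⊗v_j + v_i⊗v_j⊗v_j) + (1/3)∑_{S₁} v_i⊗v_j⊗v_k − (1/6)∑_{S₂} v_i⊗v_j⊗v_k`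
vanishes in `(ℝ^d)^{⊗3}`, where `S₁ = {i<j<k or i>j>k}` and `S₂ = {i<j>k or i>j<k}`. -/
theorem level_three_logSig_vanishes_of_linear_relation (d : ℕ) (v : Fin 3 → Fin d → ℝ)
    (hrel : v 0 + (3 : ℝ) • v 1 + v 2 = 0) :
    ∀ p q r : Fin d,
      (1/12 : ℝ) * (∑ i : Fin 3, ∑ j : Fin 3,
          if i ≠ j then v i p * v i q * v j r + v i p * v j q * v j r else 0)
        + (1/3 : ℝ) * (∑ i : Fin 3, ∑ j : Fin 3, ∑ k : Fin 3,
          if (i < j ∧ j < k) ∨ (k < j ∧ j < i) then v i p * v j q * v k r else 0)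
        - (1/6 : ℝ) * (∑ i : Fin 3, ∑ j : Fin 3, ∑ k : Fin 3,
          if (i < j ∧ k < j) ∨ (j < i ∧ j < k) then v i p * v j q * v k r else 0)
      = 0 := by
  intro p q r
  exact logSigLevelThree_eq_zero_of_middle_eq v
    (eq_neg_third_smul_of_add_three_smul_add_eq_zero hrel) p q r
end
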